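/- Let n ≥ 2 be an integer, ρ > 0, θ ≥ 0, 0 = t_0 < t_1 < ⋯ < t_N = T a time grid, and x_1,…,x_n ∈ ℝ with mean x̄ := (1/n)Σ_{j=1}^n x_j. Suppose ξ_1,…,ξ_n ∈ ℝ^{N+1} satisfy 1^⊤ξ_i = x_i for every i, and for each i the vector ξ_i minimizes the map η ↦ (1/2)·η^⊤Γ^θη + η^⊤Γ̃(Σ_{j≠i}ξ_j) over the affine set {η ∈ ℝ^{N+1} : 1^⊤η = x_i}. Then necessarily ξ_i = x̄·v + (x_i − x̄)·w for every i; i.e. the deterministic Nash equilibrium is unique. -/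

import Mathlib

open Matrix Finset

noncomputable section

/-- The matrix `Γ^θ`. -/
def Gam (ρ θ : ℝ) {N : ℕ} (t : Fin (N + 1) → ℝ) : Matrix (Fin (N + 1)) (Fin (N + 1)) ℝ :=
  Matrix.of (fun i j => Real.exp (-(ρ * |t i - t j|)) + (if i = j then 2 * θ else 0))

/-- The matrix `Γ̃`. -/
def GamT (ρ : ℝ) {N : ℕ} (t : Fin (N + 1) → ℝ) : Matrix (Fin (N + 1)) (Fin (N + 1)) ℝ :=
  Matrix.of (fun i j =>
    if i < j then 0 else if i = j then 1 / 2 else Real.exp (-(ρ * (t i - t j))))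

/-- `ν := (Γ^θ + (n−1)Γ̃)^{−1} 1`. -/
def nuG (n : ℕ) (ρ θ : ℝ) {N : ℕ} (t : Fin (N + 1) → ℝ) : Fin (N + 1) → ℝ :=
  (Gam ρ θ t + ((n : ℝ) - 1) • GamT ρ t)⁻¹.mulVec 1

/-- `ω := (Γ^θ − Γ̃)^{−1} 1`. -/
def omG (ρ θ : ℝ) {N : ℕ} (t : Fin (N + 1) → ℝ) : Fin (N + 1) → ℝ :=
  (Gam ρ θ t - GamT ρ t)⁻¹.mulVec 1

/-- `v := ν / (1^⊤ν)`. -/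
def vG (n : ℕ) (ρ θ : ℝ) {N : ℕ} (t : Fin (N + 1) → ℝ) : Fin (N + 1) → ℝ :=
  (1 / ∑ k, nuG n ρ θ t k) • nuG n ρ θ t

/-- `w := ω / (1^⊤ω)`. -/
def wG (ρ θ : ℝ) {N : ℕ} (t : Fin (N + 1) → ℝ) : Fin (N + 1) → ℝ :=
  (1 / ∑ k, omG ρ θ t k) • omG ρ θ t

/-- Execution cost of a strategy `η` given the aggregate `g` of the opponents' strategies. -/
def costF (ρ θ : ℝ) {N : ℕ} (t : Fin (N + 1) → ℝ) (η g : Fin (N + 1) → ℝ) : ℝ :=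
  (1 / 2) * (η ⬝ᵥ (Gam ρ θ t).mulVec η) + η ⬝ᵥ (GamT ρ t).mulVec g

lemma lin_quad_zero (a b : ℝ) (h : ∀ s : ℝ, 0 ≤ a * s + b * s ^ 2) : a = 0 := by
  by_contra ha
  have hb : (0:ℝ) < 1 + |b| := by positivity
  have hba : b ≤ |b| := le_abs_self b
  have ha2 : 0 < a ^ 2 := by positivity
  have h1 := h (-a / (1 + |b|))
  have h2 : a * (-a / (1 + |b|)) + b * (-a / (1 + |b|)) ^ 2
      = (-(a ^ 2) * (1 + |b|) + b * a ^ 2) / (1 + |b|) ^ 2 := by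
    field_simp
  rw [h2] at h1
  have hc2 : (0:ℝ) < (1 + |b|) ^ 2 := by positivity
  have h3 : 0 ≤ -(a ^ 2) * (1 + |b|) + b * a ^ 2 := by
    have := (le_div_iff₀ hc2).mp h1
    linarith
  have h4 : b * a ^ 2 ≤ |b| * a ^ 2 := mul_le_mul_of_nonneg_right hba (le_of_lt ha2)
  nlinarith

lemma key_sum_pos (M : ℕ) (s y : ℕ → ℝ) (hs0 : 0 < s 0)
    (hs : ∀ k, k + 1 < M → s k < s (k + 1))
    (j₀ : ℕ) (hj₀ : j₀ < M) (hy : y j₀ ≠ 0) :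
    0 < ∑ i ∈ Finset.range M, ∑ j ∈ Finset.range M, y i * y j * min (s i) (s j) := by
  classical
  have hM : 0 < M := lt_of_le_of_lt (Nat.zero_le _) hj₀
  set d : ℕ → ℝ := fun k => if k = 0 then s 0 else s k - s (k - 1) with hd
  -- telescoping
  have htel : ∀ m, m < M → ∑ k ∈ Finset.range (m + 1), d k = s m := by
    intro m
    induction m with
    | zero => intro _; simp [hd]
    | succ p ih =>
      intro hp
      rw [Finset.sum_range_succ, ih (by omega)]
      simp [hd]
  -- monotonicity on [0, M)
  have smono : ∀ j, j < M → ∀ i, i ≤ j → s i ≤ s j := by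
    intro j
    induction j with
    | zero =>
      intro _ i hi
      have : i = 0 := Nat.le_zero.mp hi
      simp [this]
    | succ p ih =>
      intro hp i hi
      rcases Nat.lt_succ_iff_lt_or_eq.mp (Nat.lt_succ_of_le hi) with h | h
      · exact le_trans (ih (by omega) i (by omega)) (le_of_lt (hs p hp))
      · simp [h]
  -- d positive on range M
  have hdpos : ∀ k, k < M → 0 < d k := by
    intro k hk
    by_cases h0 : k = 0
    · simpa [hd, h0] using hs0
    · have hk1 : (k - 1) + 1 = k := by omega
      have := hs (k - 1) (by omega)
      rw [hk1] at this
      simp only [hd, if_neg h0]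
      linarith
  -- min identity for i ≤ j
  have aux : ∀ i j, i ≤ j → j < M →
      (∑ k ∈ Finset.range M, if k ≤ i ∧ k ≤ j then d k else 0) = s i := by
    intro i j hij hjM
    have h1 : (∑ k ∈ Finset.range M, if k ≤ i ∧ k ≤ j then d k else 0)
        = ∑ k ∈ Finset.range M, if k ≤ i then d k else 0 := by
      refine Finset.sum_congr rfl fun k _ => ?_
      by_cases h : k ≤ i
      · rw [if_pos ⟨h, le_trans h hij⟩, if_pos h]
      · rw [if_neg (fun hc => h hc.1), if_neg h]
    rw [h1, ← Finset.sum_subset (Finset.range_subset_range.mpr (by omega : i + 1 ≤ M))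
      (fun k _ hk => if_neg (by simp at hk; omega))]
    rw [Finset.sum_congr rfl fun k hk => if_pos (by simp at hk; omega)]
    exact htel i (by omega)
  have hmin : ∀ i j, i < M → j < M → min (s i) (s j)
      = ∑ k ∈ Finset.range M, if k ≤ i ∧ k ≤ j then d k else 0 := by
    intro i j hi hj
    rcases le_total i j with h | h
    · rw [aux i j h hj, min_eq_left (smono j hj i h)]
    · have : (∑ k ∈ Finset.range M, if k ≤ i ∧ k ≤ j then d k else 0)
          = ∑ k ∈ Finset.range M, if k ≤ j ∧ k ≤ i then d k else 0 := by
        exact Finset.sum_congr rfl fun k _ => if_congr and_comm rfl rfl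
      rw [this, aux j i h hi, min_eq_right (smono i hi j h)]
  -- rewrite the double sum
  set T : ℕ → ℝ := fun k => ∑ i ∈ Finset.range M, if k ≤ i then y i else 0 with hT
  have hrw : ∑ i ∈ Finset.range M, ∑ j ∈ Finset.range M, y i * y j * min (s i) (s j)
      = ∑ k ∈ Finset.range M, d k * (T k) ^ 2 := by
    have step1 : ∀ i ∈ Finset.range M, ∀ j ∈ Finset.range M,
        y i * y j * min (s i) (s j)
        = ∑ k ∈ Finset.range M, (if k ≤ i then y i else 0) * (if k ≤ j then y j else 0) * d k := by
      intro i hi j hj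
      simp only [Finset.mem_range] at hi hj
      rw [hmin i j hi hj, Finset.mul_sum]
      refine Finset.sum_congr rfl fun k _ => ?_
      by_cases h1 : k ≤ i <;> by_cases h2 : k ≤ j <;> simp [h1, h2]
    calc ∑ i ∈ Finset.range M, ∑ j ∈ Finset.range M, y i * y j * min (s i) (s j)
        = ∑ i ∈ Finset.range M, ∑ j ∈ Finset.range M, ∑ k ∈ Finset.range M,
            (if k ≤ i then y i else 0) * (if k ≤ j then y j else 0) * d k := by
          refine Finset.sum_congr rfl fun i hi => Finset.sum_congr rfl fun j hj => step1 i hi j hj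
      _ = ∑ i ∈ Finset.range M, ∑ k ∈ Finset.range M, ∑ j ∈ Finset.range M,
            (if k ≤ i then y i else 0) * (if k ≤ j then y j else 0) * d k := by
          exact Finset.sum_congr rfl fun i _ => Finset.sum_comm
      _ = ∑ k ∈ Finset.range M, ∑ i ∈ Finset.range M, ∑ j ∈ Finset.range M,
            (if k ≤ i then y i else 0) * (if k ≤ j then y j else 0) * d k :=
          Finset.sum_comm
      _ = ∑ k ∈ Finset.range M, d k * (T k) ^ 2 := by
          refine Finset.sum_congr rfl fun k _ => ?_
          simp only [hT]
          rw [sq, Finset.sum_mul_sum, Finset.mul_sum]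
          refine Finset.sum_congr rfl fun i _ => ?_
          rw [Finset.mul_sum]
          exact Finset.sum_congr rfl fun j _ => by ring
  rw [hrw]
  -- strict positivity
  set k₀ : ℕ := Nat.findGreatest (fun k => y k ≠ 0) (M - 1) with hk₀
  have hk₀P : y k₀ ≠ 0 :=
    Nat.findGreatest_spec (P := fun k => y k ≠ 0) (show j₀ ≤ M - 1 by omega) hy
  have hk₀le : k₀ < M := lt_of_le_of_lt (Nat.findGreatest_le _) (by omega)
  have hTk₀ : T k₀ = y k₀ := by
    simp only [hT]
    rw [Finset.sum_eq_single k₀]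
    · simp
    · intro i hi hne
      simp only [Finset.mem_range] at hi
      by_cases h : k₀ ≤ i
      · have hgt : k₀ < i := lt_of_le_of_ne h (Ne.symm hne)
        have hz := Nat.findGreatest_is_greatest (P := fun k => y k ≠ 0)
          (by omega : Nat.findGreatest (fun k => y k ≠ 0) (M - 1) < i) (by omega)
        rw [if_pos h, not_not.mp hz]
      · rw [if_neg h]
    · intro h
      exact absurd (Finset.mem_range.mpr hk₀le) h
  refine Finset.sum_pos' (fun k hk => ?_) ⟨k₀, Finset.mem_range.mpr hk₀le, ?_⟩
  · exact mul_nonneg (le_of_lt (hdpos k (Finset.mem_range.mp hk))) (sq_nonneg _)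
  · rw [hTk₀]
    exact mul_pos (hdpos k₀ hk₀le) (by positivity)

lemma qpos {N : ℕ} (ρ : ℝ) (hρ : 0 < ρ) (t : Fin (N + 1) → ℝ) (hmono : StrictMono t)
    (x : Fin (N + 1) → ℝ) (hx : x ≠ 0) :
    0 < x ⬝ᵥ (Gam ρ 0 t).mulVec x := by
  classical
  set yy : ℕ → ℝ :=
    fun k => if h : k < N + 1 then Real.exp (-(ρ * t ⟨k, h⟩)) * x ⟨k, h⟩ else 0 with hyy
  set ss : ℕ → ℝ := fun k => if h : k < N + 1 then Real.exp (2 * ρ * t ⟨k, h⟩) else 0 with hss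
  have hpt : ∀ i j : Fin (N + 1), x i * (Gam ρ 0 t i j * x j)
      = yy i * yy j * min (ss i) (ss j) := by
    intro i j
    have hiv : (i : ℕ) < N + 1 := i.isLt
    have hjv : (j : ℕ) < N + 1 := j.isLt
    have hminss : min (ss i) (ss j) = Real.exp (2 * ρ * min (t i) (t j)) := by
      simp only [hss, dif_pos hiv, dif_pos hjv, Fin.eta]
      rcases le_total (t i) (t j) with h | h
      · rw [min_eq_left h, min_eq_left (Real.exp_le_exp.mpr (by nlinarith))]
      · rw [min_eq_right h, min_eq_right (Real.exp_le_exp.mpr (by nlinarith))]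
    have hexp : Real.exp (-(ρ * |t i - t j|))
        = Real.exp (-(ρ * t i)) * Real.exp (-(ρ * t j)) * Real.exp (2 * ρ * min (t i) (t j)) := by
      rw [← Real.exp_add, ← Real.exp_add]
      congr 1
      rcases le_total (t i) (t j) with h | h
      · rw [abs_of_nonpos (by linarith), min_eq_left h]; ring
      · rw [abs_of_nonneg (by linarith), min_eq_right h]; ring
    have hG : Gam ρ 0 t i j = Real.exp (-(ρ * |t i - t j|)) := by
      simp [Gam]
    rw [hG, hexp, hminss]
    simp only [hyy, dif_pos hiv, dif_pos hjv, Fin.eta]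
    ring
  have hsum : x ⬝ᵥ (Gam ρ 0 t).mulVec x
      = ∑ i ∈ Finset.range (N + 1), ∑ j ∈ Finset.range (N + 1),
          yy i * yy j * min (ss i) (ss j) := by
    have e1 : x ⬝ᵥ (Gam ρ 0 t).mulVec x
        = ∑ i : Fin (N + 1), ∑ j : Fin (N + 1), x i * (Gam ρ 0 t i j * x j) := by
      simp [dotProduct, mulVec, Finset.mul_sum]
    rw [e1]
    have e2 : ∀ i : Fin (N + 1),
        ∑ j : Fin (N + 1), x i * (Gam ρ 0 t i j * x j)
        = ∑ j ∈ Finset.range (N + 1), yy i * yy j * min (ss i) (ss j) := by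
      intro i
      rw [Finset.sum_congr rfl fun j _ => hpt i j]
      exact Fin.sum_univ_eq_sum_range (fun b => yy i * yy b * min (ss i) (ss b)) (N + 1)
    rw [Finset.sum_congr rfl fun i _ => e2 i]
    exact Fin.sum_univ_eq_sum_range
      (fun a => ∑ j ∈ Finset.range (N + 1), yy a * yy j * min (ss a) (ss j)) (N + 1)
  rw [hsum]
  obtain ⟨i0, hi0⟩ : ∃ i, x i ≠ 0 := Function.ne_iff.mp hx
  refine key_sum_pos (N + 1) ss yy ?_ ?_ i0.val i0.isLt ?_
  · simp only [hss, dif_pos (Nat.succ_pos N)]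
    exact Real.exp_pos _
  · intro k hk
    have hk' : k < N + 1 := by omega
    simp only [hss, dif_pos hk, dif_pos hk']
    exact Real.exp_lt_exp.mpr (by
      have := hmono (show (⟨k, hk'⟩ : Fin (N + 1)) < ⟨k + 1, hk⟩ from Fin.mk_lt_mk.mpr (Nat.lt_succ_self k))
      nlinarith)
  · simp only [hyy, dif_pos i0.isLt, Fin.eta]
    exact mul_ne_zero (Real.exp_ne_zero _) hi0

lemma dot_transpose {m : Type*} [Fintype m] (A : Matrix m m ℝ) (x : m → ℝ) :
    x ⬝ᵥ Aᵀ.mulVec x = x ⬝ᵥ A.mulVec x := by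
  rw [Matrix.mulVec_transpose, dotProduct_comm, ← Matrix.dotProduct_mulVec]

lemma gam_symm (ρ θ : ℝ) {N : ℕ} (t : Fin (N + 1) → ℝ) : (Gam ρ θ t)ᵀ = Gam ρ θ t := by
  ext i j
  simp only [Gam, Matrix.transpose_apply, Matrix.of_apply, abs_sub_comm (t j) (t i)]
  congr 1
  simp [eq_comm]

lemma dot_gam_symm (ρ θ : ℝ) {N : ℕ} (t : Fin (N + 1) → ℝ) (x y : Fin (N + 1) → ℝ) :
    x ⬝ᵥ (Gam ρ θ t).mulVec y = y ⬝ᵥ (Gam ρ θ t).mulVec x := by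
  conv_lhs => rw [← gam_symm ρ θ t]
  rw [Matrix.mulVec_transpose, dotProduct_comm, ← Matrix.dotProduct_mulVec]

lemma gamT_add_transpose (ρ : ℝ) {N : ℕ} (t : Fin (N + 1) → ℝ) (hmono : StrictMono t) :
    GamT ρ t + (GamT ρ t)ᵀ = Gam ρ 0 t := by
  ext i j
  simp only [Matrix.add_apply, Matrix.transpose_apply, GamT, Gam, Matrix.of_apply]
  rcases lt_trichotomy i j with h | h | h
  · have ht : t i < t j := hmono h
    rw [if_pos h, if_neg (asymm h), if_neg (ne_of_gt h), if_neg (ne_of_lt h),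
      abs_of_neg (by linarith : t i - t j < 0)]
    ring_nf
  · subst h
    simp
    norm_num
  · have ht : t j < t i := hmono h
    rw [if_neg (asymm h), if_neg (ne_of_gt h), if_pos h, if_neg (ne_of_gt h),
      abs_of_pos (by linarith : 0 < t i - t j)]

lemma gamT_quad (ρ : ℝ) {N : ℕ} (t : Fin (N + 1) → ℝ) (hmono : StrictMono t)
    (x : Fin (N + 1) → ℝ) :
    x ⬝ᵥ (GamT ρ t).mulVec x = (1 / 2) * (x ⬝ᵥ (Gam ρ 0 t).mulVec x) := by
  have h2 : (2 : ℝ) * (x ⬝ᵥ (GamT ρ t).mulVec x) = x ⬝ᵥ (Gam ρ 0 t).mulVec x := by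
    rw [← gamT_add_transpose ρ t hmono, Matrix.add_mulVec, dotProduct_add,
      dot_transpose]
    ring
  linarith

lemma gam_theta_quad (ρ θ : ℝ) {N : ℕ} (t : Fin (N + 1) → ℝ) (x : Fin (N + 1) → ℝ) :
    x ⬝ᵥ (Gam ρ θ t).mulVec x
      = x ⬝ᵥ (Gam ρ 0 t).mulVec x + 2 * θ * (x ⬝ᵥ x) := by
  have h : Gam ρ θ t = Gam ρ 0 t + (2 * θ) • (1 : Matrix (Fin (N + 1)) (Fin (N + 1)) ℝ) := by
    ext i j
    simp only [Gam, Matrix.add_apply, Matrix.smul_apply, Matrix.one_apply, Matrix.of_apply,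
      smul_eq_mul]
    split_ifs <;> ring
  rw [h, Matrix.add_mulVec, dotProduct_add, Matrix.smul_mulVec, Matrix.one_mulVec,
    dotProduct_smul, smul_eq_mul]

lemma posA {N : ℕ} (n : ℕ) (hn : 2 ≤ n) (ρ θ : ℝ) (hρ : 0 < ρ) (hθ : 0 ≤ θ)
    (t : Fin (N + 1) → ℝ) (hmono : StrictMono t) (x : Fin (N + 1) → ℝ) (hx : x ≠ 0) :
    0 < x ⬝ᵥ (Gam ρ θ t + ((n : ℝ) - 1) • GamT ρ t).mulVec x := by
  rw [Matrix.add_mulVec, dotProduct_add, Matrix.smul_mulVec, dotProduct_smul,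
    smul_eq_mul, gam_theta_quad, gamT_quad ρ t hmono]
  have h0 := qpos ρ hρ t hmono x hx
  have hxx : 0 ≤ x ⬝ᵥ x := by
    simp only [dotProduct]
    exact Finset.sum_nonneg fun i _ => mul_self_nonneg _
  have hn1 : (1 : ℝ) ≤ (n : ℝ) - 1 := by
    have : (2 : ℝ) ≤ (n : ℝ) := by exact_mod_cast hn
    linarith
  nlinarith

lemma posB {N : ℕ} (ρ θ : ℝ) (hρ : 0 < ρ) (hθ : 0 ≤ θ)
    (t : Fin (N + 1) → ℝ) (hmono : StrictMono t) (x : Fin (N + 1) → ℝ) (hx : x ≠ 0) :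
    0 < x ⬝ᵥ (Gam ρ θ t - GamT ρ t).mulVec x := by
  rw [Matrix.sub_mulVec, dotProduct_sub, gam_theta_quad, gamT_quad ρ t hmono]
  have h0 := qpos ρ hρ t hmono x hx
  have hxx : 0 ≤ x ⬝ᵥ x := by
    simp only [dotProduct]
    exact Finset.sum_nonneg fun i _ => mul_self_nonneg _
  nlinarith

lemma pd_isUnit_det {N : ℕ} (A : Matrix (Fin (N + 1)) (Fin (N + 1)) ℝ)
    (h : ∀ x : Fin (N + 1) → ℝ, x ≠ 0 → 0 < x ⬝ᵥ A.mulVec x) : IsUnit A.det := by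
  rw [isUnit_iff_ne_zero]
  intro hdet
  obtain ⟨v, hv, hv0⟩ := Matrix.exists_mulVec_eq_zero_iff.mpr hdet
  have := h v hv
  rw [hv0] at this
  simp at this

/-- Uniqueness of the deterministic Nash equilibrium: any profile satisfying the budget
constraints and the mutual best-response property must equal
`ξ_i = x̄ v + (x_i − x̄) w`. -/
theorem stmt3 (n : ℕ) (hn : 2 ≤ n) (ρ θ T : ℝ) (hρ : 0 < ρ) (hθ : 0 ≤ θ)
    (N : ℕ) (hN : 1 ≤ N) (t : Fin (N + 1) → ℝ)
    (ht0 : t 0 = 0) (htT : t (Fin.last N) = T) (hmono : StrictMono t)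
    (x : Fin n → ℝ) (ξ : Fin n → Fin (N + 1) → ℝ)
    (hbudget : ∀ i, (∑ k, ξ i k) = x i)
    (hmin : ∀ i, ∀ η : Fin (N + 1) → ℝ, (∑ k, η k) = x i →
      costF ρ θ t (ξ i) (∑ j ∈ Finset.univ.erase i, ξ j)
        ≤ costF ρ θ t η (∑ j ∈ Finset.univ.erase i, ξ j)) :
    ∀ i, ξ i = ((∑ j, x j) / (n : ℝ)) • vG n ρ θ t
        + (x i - (∑ j, x j) / (n : ℝ)) • wG ρ θ t := by
  classical
  have hnR : (0:ℝ) < (n : ℝ) := by exact_mod_cast (by omega : 0 < n)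
  have hnne : (n:ℝ) ≠ 0 := ne_of_gt hnR
  have hdetA : IsUnit (Gam ρ θ t + ((n:ℝ)-1) • GamT ρ t).det :=
    pd_isUnit_det _ (fun z hz => posA n hn ρ θ hρ hθ t hmono z hz)
  have hdetB : IsUnit (Gam ρ θ t - GamT ρ t).det :=
    pd_isUnit_det _ (fun z hz => posB ρ θ hρ hθ t hmono z hz)
  set S : Fin (N+1) → ℝ := ∑ j, ξ j with hS
  -- first-order conditions
  have hfoc : ∀ i, ∃ lam : ℝ,
      (Gam ρ θ t).mulVec (ξ i) + (GamT ρ t).mulVec (S - ξ i)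
        = lam • (1 : Fin (N+1) → ℝ) := by
    intro i
    have hgS : (∑ j ∈ Finset.univ.erase i, ξ j) = S - ξ i := by
      rw [hS, Finset.sum_erase_eq_sub (Finset.mem_univ i)]
    set z := (Gam ρ θ t).mulVec (ξ i) + (GamT ρ t).mulVec (S - ξ i) with hz
    have foc0 : ∀ d : Fin (N+1) → ℝ, (∑ k, d k) = 0 → d ⬝ᵥ z = 0 := by
      intro d hd
      apply lin_quad_zero (d ⬝ᵥ z) ((1/2) * (d ⬝ᵥ (Gam ρ θ t).mulVec d))
      intro s
      have hsumη : (∑ k, (ξ i + s • d) k) = x i := by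
        simp only [Pi.add_apply, Pi.smul_apply, smul_eq_mul, Finset.sum_add_distrib,
          ← Finset.mul_sum, hd, hbudget i, mul_zero, add_zero]
      have hle := hmin i (ξ i + s • d) hsumη
      rw [hgS] at hle
      have hexp : costF ρ θ t (ξ i + s • d) (S - ξ i) - costF ρ θ t (ξ i) (S - ξ i)
          = (d ⬝ᵥ z) * s + ((1/2) * (d ⬝ᵥ (Gam ρ θ t).mulVec d)) * s ^ 2 := by
        simp only [costF, hz, Matrix.mulVec_add, Matrix.mulVec_smul, dotProduct_add,
          add_dotProduct, smul_dotProduct, dotProduct_smul, smul_eq_mul]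
        rw [dot_gam_symm ρ θ t (ξ i) d]
        ring
      linarith
    have hzc : ∀ k, z k = z 0 := by
      intro k
      have hdk : (∑ m, (Pi.single k 1 - Pi.single 0 1 : Fin (N+1) → ℝ) m) = 0 := by
        simp [Finset.sum_sub_distrib]
      have h := foc0 _ hdk
      rw [sub_dotProduct, single_dotProduct, single_dotProduct] at h
      simp only [one_mul] at h
      linarith
    exact ⟨z 0, funext fun k => by simp [hzc k]⟩
  choose lam hlam using hfoc
  set Λ : ℝ := ∑ i, lam i with hΛ
  -- individual equation in terms of B
  have hBi : ∀ i, (Gam ρ θ t - GamT ρ t).mulVec (ξ i)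
      = lam i • (1 : Fin (N+1) → ℝ) - (GamT ρ t).mulVec S := by
    intro i
    have h := hlam i
    rw [Matrix.mulVec_sub] at h
    rw [Matrix.sub_mulVec]
    rw [← h]
    abel
  -- aggregate equation
  have hsumB : (Gam ρ θ t - GamT ρ t).mulVec S + (n:ℝ) • (GamT ρ t).mulVec S
      = Λ • (1 : Fin (N+1) → ℝ) := by
    have h1 : ∑ i : Fin n, (Gam ρ θ t - GamT ρ t).mulVec (ξ i)
        = (Gam ρ θ t - GamT ρ t).mulVec S := by
      rw [hS]
      simp only [← Matrix.mulVecLin_apply]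
      rw [map_sum]
    have h2 : ∑ i : Fin n, ((lam i • (1 : Fin (N+1) → ℝ)) - (GamT ρ t).mulVec S)
        = Λ • (1 : Fin (N+1) → ℝ) - (n:ℝ) • (GamT ρ t).mulVec S := by
      rw [Finset.sum_sub_distrib, ← Finset.sum_smul, Finset.sum_const, Finset.card_univ,
        Fintype.card_fin, ← hΛ, Nat.cast_smul_eq_nsmul]
    have h3 := Finset.sum_congr rfl (fun i (_ : i ∈ Finset.univ) => hBi i)
    rw [h1, h2] at h3
    rw [h3]
    abel
  have hAS : (Gam ρ θ t + ((n:ℝ)-1) • GamT ρ t).mulVec S = Λ • (1 : Fin (N+1) → ℝ) := by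
    have hmat : Gam ρ θ t + ((n:ℝ)-1) • GamT ρ t
        = (Gam ρ θ t - GamT ρ t) + (n:ℝ) • GamT ρ t := by
      ext a b
      simp only [Matrix.add_apply, Matrix.sub_apply, Matrix.smul_apply, smul_eq_mul]
      ring
    rw [hmat, Matrix.add_mulVec, Matrix.smul_mulVec, hsumB]
  -- solve for S
  have hSν : S = Λ • nuG n ρ θ t := by
    have h1 : (Gam ρ θ t + ((n:ℝ)-1) • GamT ρ t)⁻¹.mulVec
        ((Gam ρ θ t + ((n:ℝ)-1) • GamT ρ t).mulVec S) = S := by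
      rw [Matrix.mulVec_mulVec, Matrix.nonsing_inv_mul _ hdetA, Matrix.one_mulVec]
    rw [← h1, hAS, Matrix.mulVec_smul]
    rfl
  -- positivity of sums
  have hν1 : (Gam ρ θ t + ((n:ℝ)-1) • GamT ρ t).mulVec (nuG n ρ θ t) = 1 := by
    show (Gam ρ θ t + ((n:ℝ)-1) • GamT ρ t).mulVec
      ((Gam ρ θ t + ((n:ℝ)-1) • GamT ρ t)⁻¹.mulVec 1) = 1
    rw [Matrix.mulVec_mulVec, Matrix.mul_nonsing_inv _ hdetA, Matrix.one_mulVec]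
  have hνne : nuG n ρ θ t ≠ 0 := by
    intro h
    rw [h, Matrix.mulVec_zero] at hν1
    have := congrFun hν1 0
    simp at this
  have hνsum : 0 < ∑ k, nuG n ρ θ t k := by
    have h1 : nuG n ρ θ t ⬝ᵥ (Gam ρ θ t + ((n:ℝ)-1) • GamT ρ t).mulVec (nuG n ρ θ t)
        = ∑ k, nuG n ρ θ t k := by
      rw [hν1]
      simp [dotProduct]
    rw [← h1]
    exact posA n hn ρ θ hρ hθ t hmono _ hνne
  have hω1 : (Gam ρ θ t - GamT ρ t).mulVec (omG ρ θ t) = 1 := by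
    show (Gam ρ θ t - GamT ρ t).mulVec ((Gam ρ θ t - GamT ρ t)⁻¹.mulVec 1) = 1
    rw [Matrix.mulVec_mulVec, Matrix.mul_nonsing_inv _ hdetB, Matrix.one_mulVec]
  have hωne : omG ρ θ t ≠ 0 := by
    intro h
    rw [h, Matrix.mulVec_zero] at hω1
    have := congrFun hω1 0
    simp at this
  have hωsum : 0 < ∑ k, omG ρ θ t k := by
    have h1 : omG ρ θ t ⬝ᵥ (Gam ρ θ t - GamT ρ t).mulVec (omG ρ θ t)
        = ∑ k, omG ρ θ t k := by
      rw [hω1]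
      simp [dotProduct]
    rw [← h1]
    exact posB ρ θ hρ hθ t hmono _ hωne
  have hωne' : (∑ k, omG ρ θ t k) ≠ 0 := ne_of_gt hωsum
  have hνne' : (∑ k, nuG n ρ θ t k) ≠ 0 := ne_of_gt hνsum
  -- budget of S
  have hSsum : ∑ k, S k = ∑ j, x j := by
    simp only [hS, Finset.sum_apply]
    rw [Finset.sum_comm]
    exact Finset.sum_congr rfl fun j _ => hbudget j
  have hΛeq : Λ * (∑ k, nuG n ρ θ t k) = ∑ j, x j := by
    have h := congrArg (fun f : Fin (N+1) → ℝ => ∑ k, f k) hSν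
    simp only [Pi.smul_apply, smul_eq_mul, ← Finset.mul_sum] at h
    rw [hSsum] at h
    exact h.symm
  -- individual solution
  have hBS : (Gam ρ θ t - GamT ρ t).mulVec S
      = Λ • (1 : Fin (N+1) → ℝ) - (n:ℝ) • (GamT ρ t).mulVec S :=
    eq_sub_of_add_eq hsumB
  have hBi2 : ∀ i, (Gam ρ θ t - GamT ρ t).mulVec (ξ i - ((1:ℝ)/n) • S)
      = (lam i - Λ / n) • (1 : Fin (N+1) → ℝ) := by
    intro i
    rw [Matrix.mulVec_sub, Matrix.mulVec_smul, hBi i, hBS]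
    funext k
    simp only [Pi.sub_apply, Pi.smul_apply, Pi.one_apply, smul_eq_mul]
    field_simp
    ring
  have hξi : ∀ i, ξ i - ((1:ℝ)/n) • S = (lam i - Λ / n) • omG ρ θ t := by
    intro i
    have h1 : (Gam ρ θ t - GamT ρ t)⁻¹.mulVec
        ((Gam ρ θ t - GamT ρ t).mulVec (ξ i - ((1:ℝ)/n) • S)) = ξ i - ((1:ℝ)/n) • S := by
      rw [Matrix.mulVec_mulVec, Matrix.nonsing_inv_mul _ hdetB, Matrix.one_mulVec]
    rw [← h1, hBi2 i, Matrix.mulVec_smul]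
    rfl
  have hlami : ∀ i, lam i - Λ / n
      = (x i - (∑ j, x j) / n) / (∑ k, omG ρ θ t k) := by
    intro i
    have h := congrArg (fun f : Fin (N+1) → ℝ => ∑ k, f k) (hξi i)
    simp only [Pi.sub_apply, Pi.smul_apply, smul_eq_mul, Finset.sum_sub_distrib,
      ← Finset.mul_sum, hbudget i, hSsum] at h
    rw [eq_div_iff hωne']
    linear_combination -h
  intro i
  have hfin : ξ i = ((1:ℝ)/n) • S + (lam i - Λ / n) • omG ρ θ t := by
    rw [← hξi i]
    abel
  rw [hfin, hSν]
  congr 1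
  · unfold vG
    rw [smul_smul, smul_smul]
    congr 1
    field_simp
    linear_combination hΛeq
  · unfold wG
    rw [smul_smul, hlami i]
    congr 1
    field_simp
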